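/- arXiv:1802.04715 — 9 statements merged into one kernel-verified Lean document; each statement's English description precedes it below -/
import Mathlib

section
/- For any sequence of real numbers a_1, ..., a_T in [0,1], the sum over t of a_t^4 / (a_1^2 + a_2^2 + ... + a_t^2)^{3/2} is at most 44 (terms with zero denominator interpreted as 0). -/
theorem key_step (x d : ℝ) (hx : 0 ≤ x) (hd0 : 0 ≤ d) (hd1 : d ≤ 1) :
    d ^ 2 / (x + d) ^ ((3:ℝ)/2) ≤
      44 * (Real.sqrt (x + d) / (Real.sqrt (x + d) + 1)) -
      44 * (Real.sqrt x / (Real.sqrt x + 1)) := by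
  set u := Real.sqrt (x + d) with hu
  set v := Real.sqrt x with hv
  have hu0 : 0 ≤ u := Real.sqrt_nonneg _
  have hv0 : 0 ≤ v := Real.sqrt_nonneg _
  have hu2 : u ^ 2 = x + d := Real.sq_sqrt (by linarith)
  have hv2 : v ^ 2 = x := Real.sq_sqrt hx
  have hvu : v ≤ u := Real.sqrt_le_sqrt (by linarith)
  have hpow : (x + d) ^ ((3:ℝ)/2) = u ^ 3 := by
    rw [hu, show ((3:ℝ)/2) = (1/2) * 3 by norm_num,
      Real.rpow_mul (by linarith), ← Real.sqrt_eq_rpow,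
      ← Real.rpow_natCast (Real.sqrt (x+d)) 3]
    norm_num
  rw [hpow]
  rcases eq_or_lt_of_le hu0 with h0 | h0
  · have hd : d = 0 := by nlinarith
    have hv' : v = 0 := by nlinarith
    simp [hd, ← h0, hv']
  · have hd' : d = u ^ 2 - v ^ 2 := by linarith
    have h1 : (0:ℝ) < u + 1 := by linarith
    have h2 : (0:ℝ) < v + 1 := by linarith
    have h3 : (0:ℝ) < u ^ 3 := by positivity
    rw [div_le_iff₀ h3]
    have h4 : d * (u + v) * (u + 1) * (v + 1) ≤ 44 * u ^ 3 := by
      rcases le_total u 1 with hc | hc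
      · have : d * (u + v) * (u + 1) * (v + 1) ≤ u ^ 2 * (2 * u) * 2 * 2 := by
          have hdle : d ≤ u ^ 2 := by nlinarith
          gcongr <;> linarith
        nlinarith
      · have : d * (u + v) * (u + 1) * (v + 1) ≤ 1 * (2 * u) * (2 * u) * (2 * u) := by
          gcongr <;> linarith
        nlinarith
    have key : d ^ 2 * (u + 1) * (v + 1) ≤ 44 * (u - v) * u ^ 3 := by
      calc d ^ 2 * (u + 1) * (v + 1)
          = (u - v) * (d * (u + v) * (u + 1) * (v + 1)) := by
            linear_combination (d * (u + 1) * (v + 1)) * hd'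
        _ ≤ (u - v) * (44 * u ^ 3) :=
            mul_le_mul_of_nonneg_left h4 (by linarith)
        _ = 44 * (u - v) * u ^ 3 := by ring
    have expand : 44 * (u / (u + 1)) - 44 * (v / (v + 1))
        = 44 * (u - v) / ((u + 1) * (v + 1)) := by
      field_simp; ring
    rw [expand, div_mul_eq_mul_div, le_div_iff₀ (by positivity)]
    nlinarith [key]

theorem aux_sum (b : ℕ → ℝ) (hb : ∀ n, b n ∈ Set.Icc (0:ℝ) 1) (N : ℕ) :
    ∑ i ∈ Finset.range N, (b i) ^ 4 /
        (∑ j ∈ Finset.range (i+1), (b j) ^ 2) ^ ((3:ℝ)/2) ≤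
      44 * (Real.sqrt (∑ j ∈ Finset.range N, (b j) ^ 2) /
        (Real.sqrt (∑ j ∈ Finset.range N, (b j) ^ 2) + 1)) := by
  induction N with
  | zero => simp
  | succ n ih =>
    rw [Finset.sum_range_succ]
    have hx : (0:ℝ) ≤ ∑ j ∈ Finset.range n, (b j) ^ 2 :=
      Finset.sum_nonneg fun j _ => sq_nonneg _
    have hb0 := (hb n).1
    have hb1 := (hb n).2
    have hkey := key_step (∑ j ∈ Finset.range n, (b j) ^ 2) ((b n) ^ 2) hx
      (sq_nonneg _) (by nlinarith)
    have heq : (b n) ^ 4 = ((b n) ^ 2) ^ 2 := by ring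
    have hsum : ∑ j ∈ Finset.range (n+1), (b j) ^ 2
        = (∑ j ∈ Finset.range n, (b j) ^ 2) + (b n) ^ 2 := Finset.sum_range_succ _ _
    rw [hsum, heq]
    linarith [hkey, ih]

/-- For `a t ∈ [0,1]`, `∑ t, a t ^ 4 / (a 1 ^ 2 + ⋯ + a t ^ 2) ^ (3/2) ≤ 44`
(terms with zero denominator are `0`, which is Lean's division convention). -/
theorem stmt_1 (T : ℕ) (a : Fin T → ℝ) (h : ∀ t, a t ∈ Set.Icc (0 : ℝ) 1) :
    ∑ t, (a t) ^ 4 / (∑ τ ∈ Finset.Iic t, (a τ) ^ 2) ^ ((3 : ℝ) / 2) ≤ 44 := by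
  set b : ℕ → ℝ := fun n => if hn : n < T then a ⟨n, hn⟩ else 0 with hbdef
  have hbmem : ∀ n, b n ∈ Set.Icc (0:ℝ) 1 := by
    intro n
    by_cases hn : n < T
    · simpa [hbdef, hn] using h ⟨n, hn⟩
    · simp [hbdef, hn, Set.mem_Icc]
  have hIic : ∀ t : Fin T, ∑ τ ∈ Finset.Iic t, (a τ) ^ 2
      = ∑ j ∈ Finset.range (t.1 + 1), (b j) ^ 2 := by
    intro t
    rw [Finset.sum_nbij' (i := fun (τ : Fin T) => τ.1)
      (j := fun n => (⟨n % T, Nat.mod_lt _ (t.pos)⟩ : Fin T))]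
    · intro τ hτ
      simp only [Finset.mem_Iic, Fin.le_def] at hτ
      simp [Finset.mem_range]; omega
    · intro i hi
      simp only [Finset.mem_range] at hi
      have hiT : i < T := by have := t.2; omega
      simp [Finset.mem_Iic, Fin.le_def, Nat.mod_eq_of_lt hiT]; omega
    · intro τ hτ
      ext
      simp [Nat.mod_eq_of_lt τ.2]
    · intro i hi
      simp only [Finset.mem_range] at hi
      have hiT : i < T := by have := t.2; omega
      simp [Nat.mod_eq_of_lt hiT]
    · intro τ hτ
      simp [hbdef, τ.2]
  have hmain : ∑ t, (a t) ^ 4 / (∑ τ ∈ Finset.Iic t, (a τ) ^ 2) ^ ((3 : ℝ) / 2)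
      = ∑ i ∈ Finset.range T, (b i) ^ 4 /
          (∑ j ∈ Finset.range (i+1), (b j) ^ 2) ^ ((3:ℝ)/2) := by
    rw [← Fin.sum_univ_eq_sum_range]
    refine Finset.sum_congr rfl fun t _ => ?_
    rw [hIic t]
    congr 1
    simp [hbdef, t.2]
  rw [hmain]
  have hs0 : (0:ℝ) ≤ Real.sqrt (∑ j ∈ Finset.range T, (b j) ^ 2) := Real.sqrt_nonneg _
  have hfrac : Real.sqrt (∑ j ∈ Finset.range T, (b j) ^ 2) /
      (Real.sqrt (∑ j ∈ Finset.range T, (b j) ^ 2) + 1) ≤ 1 := by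
    rw [div_le_one (by linarith)]; linarith
  have := aux_sum b hbmem T
  linarith
end

section
/- For any nonnegative real numbers a_1, ..., a_T, the sum over t of a_t / sqrt(a_1 + ... + a_t) is at most 2 * sqrt(a_1 + ... + a_T) (terms with zero denominator interpreted as 0). -/
lemma key_step_s2 (s b : ℝ) (hb : 0 ≤ b) (hbs : b ≤ s) :
    b / Real.sqrt s ≤ 2 * Real.sqrt s - 2 * Real.sqrt (s - b) := by
  rcases eq_or_lt_of_le (hb.trans hbs) with hs | hs
  · have hb0 : b = 0 := le_antisymm (hbs.trans hs.ge) hb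
    simp [hb0, ← hs]
  · have hu : Real.sqrt s > 0 := Real.sqrt_pos.mpr hs
    rw [div_le_iff₀ hu]
    have hu2 : Real.sqrt s ^ 2 = s := Real.sq_sqrt hs.le
    have hv2 : Real.sqrt (s - b) ^ 2 = s - b := Real.sq_sqrt (by linarith)
    have hv : 0 ≤ Real.sqrt (s - b) := Real.sqrt_nonneg _
    nlinarith [sq_nonneg (Real.sqrt s - Real.sqrt (s - b))]

lemma aux_range (f : ℕ → ℝ) (hf : ∀ i, 0 ≤ f i) (n : ℕ) :
    ∑ t ∈ Finset.range n, f t / Real.sqrt (∑ τ ∈ Finset.range (t + 1), f τ) ≤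
      2 * Real.sqrt (∑ t ∈ Finset.range n, f t) := by
  induction n with
  | zero => simp
  | succ n ih =>
    rw [Finset.sum_range_succ, Finset.sum_range_succ f]
    have hnn : 0 ≤ ∑ τ ∈ Finset.range n, f τ := Finset.sum_nonneg fun i _ => hf i
    have h1 := key_step_s2 (∑ τ ∈ Finset.range n, f τ + f n) (f n) (hf n) (by linarith)
    rw [add_sub_cancel_right] at h1
    have h2 : ∑ x ∈ Finset.range n, f x / Real.sqrt (∑ τ ∈ Finset.range (x + 1), f τ) ≤
        2 * Real.sqrt (∑ τ ∈ Finset.range n, f τ) := ih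
    linarith

/-- For nonnegative reals, `∑ t, a t / √(a 1 + ⋯ + a t) ≤ 2 √(a 1 + ⋯ + a T)`
(terms with zero denominator are `0`, which is Lean's division convention). -/
theorem stmt_2 (T : ℕ) (a : Fin T → ℝ) (h : ∀ t, 0 ≤ a t) :
    ∑ t, a t / Real.sqrt (∑ τ ∈ Finset.Iic t, a τ) ≤ 2 * Real.sqrt (∑ t, a t) := by
  set f : ℕ → ℝ := fun i => if hi : i < T then a ⟨i, hi⟩ else 0 with hfdef
  have hf : ∀ i, 0 ≤ f i := by
    intro i; simp only [hfdef]; split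
    · exact h _
    · exact le_refl 0
  have hIic : ∀ t : Fin T, ∑ τ ∈ Finset.Iic t, a τ = ∑ i ∈ Finset.range (t.val + 1), f i := by
    intro t
    apply Finset.sum_bij' (fun (τ : Fin T) (_ : τ ∈ Finset.Iic t) => τ.val)
      (fun i hi => (⟨i, (Nat.lt_succ_iff.mp (Finset.mem_range.mp hi)).trans_lt t.isLt⟩ : Fin T))
    case hi =>
      intro τ hτ
      simpa using Nat.lt_succ_of_le (Fin.le_def.mp (Finset.mem_Iic.mp hτ))
    case hj =>
      intro i hi
      simp only [Finset.mem_range] at hi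
      exact Finset.mem_Iic.mpr (Fin.mk_le_mk.mpr (Nat.lt_succ_iff.mp hi))
    case left_neg => intro τ _; rfl
    case right_neg => intro i _; rfl
    case h =>
      intro τ _
      simp [hfdef, τ.isLt]
  have htot : ∑ t, a t = ∑ i ∈ Finset.range T, f i := by
    rw [← Fin.sum_univ_eq_sum_range f T]
    apply Finset.sum_congr rfl
    intro t _
    simp [hfdef, t.isLt]
  have hsum : ∑ t, a t / Real.sqrt (∑ τ ∈ Finset.Iic t, a τ) =
      ∑ t ∈ Finset.range T, f t / Real.sqrt (∑ τ ∈ Finset.range (t + 1), f τ) := by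
    rw [← Fin.sum_univ_eq_sum_range (fun i => f i / Real.sqrt (∑ τ ∈ Finset.range (i + 1), f τ)) T]
    apply Finset.sum_congr rfl
    intro t _
    rw [hIic t]
    congr 1
    simp [hfdef]
  rw [hsum, htot]
  exact aux_range f hf T
end

section
/- Let a_1, ..., a_n be nonnegative reals, let p_min be a real with 0 < p_min <= 1/(2n), and let Delta' be the set of probability vectors p with p(i) >= p_min for all i. Then the minimum over p in Delta' of sum_i a_i / p(i) minus the minimum over the full simplex of sum_i a_i / p(i) is at most 6 * n * p_min * (sum_i sqrt(a_i))^2. -/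
open Finset Real

/-- For nonnegative reals `a i` and `0 < p_min ≤ 1/(2n)`, the minimum of `∑ i, a i / p i`
over the restricted simplex `{p : p i ≥ p_min}` exceeds the minimum over the full simplex
by at most `6 * n * p_min * (∑ i, √(a i))^2`. -/
theorem stmt_7 (n : ℕ) (a : Fin n → ℝ) (ha : ∀ i, 0 ≤ a i) (pmin : ℝ)
    (hpmin : 0 < pmin) (hpmin' : pmin ≤ 1 / (2 * n)) :
    sInf {s : ℝ | ∃ p : Fin n → ℝ, (∀ i, pmin ≤ p i) ∧ (∑ i, p i) = 1 ∧
        s = ∑ i, a i / p i}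
      - sInf {s : ℝ | ∃ p : Fin n → ℝ, (∀ i, 0 ≤ p i) ∧ (∑ i, p i) = 1 ∧
        (∀ i, 0 < a i → 0 < p i) ∧ s = ∑ i, a i / p i}
      ≤ 6 * n * pmin * (∑ i, Real.sqrt (a i)) ^ 2 := by
  -- n > 0
  have hn : 0 < n := by
    rcases Nat.eq_zero_or_pos n with h | h
    · exfalso; rw [h] at hpmin'; simp at hpmin'; linarith
    · exact h
  have hn' : (0:ℝ) < n := by exact_mod_cast hn
  set S := ∑ i, Real.sqrt (a i) with hS
  have hSnn : 0 ≤ S := Finset.sum_nonneg fun i _ => Real.sqrt_nonneg _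
  set x := (n:ℝ) * pmin with hxdef
  have hx0 : 0 < x := mul_pos hn' hpmin
  have hxhalf : x ≤ 1/2 := by
    rw [hxdef]
    have h2 : (n:ℝ) * pmin ≤ (n:ℝ) * (1/(2*n)) := mul_le_mul_of_nonneg_left hpmin' hn'.le
    have h3 : (n:ℝ) * (1/(2*n)) = 1/2 := by field_simp
    linarith
  have h1x : (0:ℝ) < 1 - x := by linarith
  -- Lower bound for the unrestricted set: every element is ≥ S^2
  have hlow : ∀ s ∈ {s : ℝ | ∃ p : Fin n → ℝ, (∀ i, 0 ≤ p i) ∧ (∑ i, p i) = 1 ∧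
      (∀ i, 0 < a i → 0 < p i) ∧ s = ∑ i, a i / p i}, S ^ 2 ≤ s := by
    rintro s ⟨p, hp0, hp1, hpa, rfl⟩
    have key : (∑ i, Real.sqrt (a i / p i) * Real.sqrt (p i)) ^ 2 ≤
        (∑ i, Real.sqrt (a i / p i) ^ 2) * (∑ i, Real.sqrt (p i) ^ 2) :=
      Finset.sum_mul_sq_le_sq_mul_sq _ _ _
    have e1 : ∀ i : Fin n, Real.sqrt (a i / p i) * Real.sqrt (p i) = Real.sqrt (a i) := by
      intro i
      rw [← Real.sqrt_mul (div_nonneg (ha i) (hp0 i))]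
      rcases eq_or_lt_of_le (ha i) with h | h
      · simp [← h]
      · have hpi : 0 < p i := hpa i h
        rw [div_mul_cancel₀ _ hpi.ne']
    have e2 : ∀ i : Fin n, Real.sqrt (a i / p i) ^ 2 = a i / p i := fun i =>
      Real.sq_sqrt (div_nonneg (ha i) (hp0 i))
    have e3 : ∀ i : Fin n, Real.sqrt (p i) ^ 2 = p i := fun i => Real.sq_sqrt (hp0 i)
    simp only [e1, e2, e3] at key
    rw [hp1, mul_one] at key
    exact key
  -- the unrestricted set is nonempty
  have hne2 : {s : ℝ | ∃ p : Fin n → ℝ, (∀ i, 0 ≤ p i) ∧ (∑ i, p i) = 1 ∧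
      (∀ i, 0 < a i → 0 < p i) ∧ s = ∑ i, a i / p i}.Nonempty := by
    refine ⟨∑ i, a i / ((n:ℝ)⁻¹), fun _ => (n:ℝ)⁻¹, fun i => by positivity, ?_,
      fun i _ => by positivity, rfl⟩
    simp [Finset.sum_const, Finset.card_univ]
    field_simp
  have hInf2 : S ^ 2 ≤ sInf {s : ℝ | ∃ p : Fin n → ℝ, (∀ i, 0 ≤ p i) ∧ (∑ i, p i) = 1 ∧
      (∀ i, 0 < a i → 0 < p i) ∧ s = ∑ i, a i / p i} := le_csInf hne2 hlow
  -- Bddbelow for restricted set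
  have hbdd1 : BddBelow {s : ℝ | ∃ p : Fin n → ℝ, (∀ i, pmin ≤ p i) ∧ (∑ i, p i) = 1 ∧
      s = ∑ i, a i / p i} := by
    refine ⟨0, ?_⟩
    rintro s ⟨p, hp, _, rfl⟩
    exact Finset.sum_nonneg fun i _ => div_nonneg (ha i) (le_trans hpmin.le (hp i))
  -- Upper bound for restricted set
  rcases eq_or_lt_of_le hSnn with hSz | hSpos
  · -- S = 0 : all a i = 0
    have haz : ∀ i, a i = 0 := by
      intro i
      have := (Finset.sum_eq_zero_iff_of_nonneg (fun i _ => Real.sqrt_nonneg (a i))).mp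
        hSz.symm i (Finset.mem_univ i)
      nlinarith [Real.sq_sqrt (ha i), this]
    have hmem : (0:ℝ) ∈ {s : ℝ | ∃ p : Fin n → ℝ, (∀ i, pmin ≤ p i) ∧ (∑ i, p i) = 1 ∧
        s = ∑ i, a i / p i} := by
      refine ⟨fun _ => (n:ℝ)⁻¹, fun i => ?_, ?_, by simp [haz]⟩
      · calc pmin ≤ 1/(2*n) := hpmin'
          _ ≤ 1/(n:ℝ) := by apply one_div_le_one_div_of_le hn'; linarith
          _ = (n:ℝ)⁻¹ := one_div _
      · simp [Finset.sum_const, Finset.card_univ]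
        field_simp
    have h1 : sInf {s : ℝ | ∃ p : Fin n → ℝ, (∀ i, pmin ≤ p i) ∧ (∑ i, p i) = 1 ∧
        s = ∑ i, a i / p i} ≤ 0 := csInf_le hbdd1 hmem
    have : (0:ℝ) ≤ 6 * n * pmin * S ^ 2 := by positivity
    rw [← hSz] at hInf2 ⊢
    simp at hInf2 ⊢
    linarith
  · -- S > 0 : witness p i = pmin + (1-x) * √(a i) / S
    set p : Fin n → ℝ := fun i => pmin + (1 - x) * Real.sqrt (a i) / S with hpdef
    have hppmin : ∀ i, pmin ≤ p i := by
      intro i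
      have h0 : 0 ≤ (1 - x) * Real.sqrt (a i) / S := by positivity
      simp only [hpdef]; linarith
    have hpsum : (∑ i, p i) = 1 := by
      simp only [hpdef, Finset.sum_add_distrib, Finset.sum_const, Finset.card_univ,
        Fintype.card_fin, nsmul_eq_mul, ← Finset.sum_div, ← Finset.mul_sum, ← hS]
      field_simp
      linarith [hxdef]
    have hval : (∑ i, a i / p i) ≤ S ^ 2 / (1 - x) := by
      have hbound : ∀ i, a i / p i ≤ Real.sqrt (a i) * S / (1 - x) := by
        intro i
        rcases eq_or_lt_of_le (ha i) with h | h
        · rw [← h]; simp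
        · have hsq : 0 < Real.sqrt (a i) := Real.sqrt_pos.mpr h
          have hden : 0 < (1 - x) * Real.sqrt (a i) / S := by positivity
          have hple : (1 - x) * Real.sqrt (a i) / S ≤ p i := by
            simp only [hpdef]; linarith
          calc a i / p i ≤ a i / ((1 - x) * Real.sqrt (a i) / S) :=
                div_le_div_of_nonneg_left (ha i) hden hple
            _ = Real.sqrt (a i) * S / (1 - x) := by
                rw [div_div_eq_mul_div, div_eq_div_iff (by positivity) h1x.ne']
                linear_combination (-(S * (1 - x))) * Real.sq_sqrt (ha i)
      calc (∑ i, a i / p i) ≤ ∑ i, Real.sqrt (a i) * S / (1 - x) :=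
            Finset.sum_le_sum fun i _ => hbound i
        _ = S ^ 2 / (1 - x) := by
            rw [← Finset.sum_div, ← Finset.sum_mul, ← hS]; ring
    have hmem : (∑ i, a i / p i) ∈ {s : ℝ | ∃ p : Fin n → ℝ, (∀ i, pmin ≤ p i) ∧
        (∑ i, p i) = 1 ∧ s = ∑ i, a i / p i} := ⟨p, hppmin, hpsum, rfl⟩
    have h1 : sInf {s : ℝ | ∃ p : Fin n → ℝ, (∀ i, pmin ≤ p i) ∧ (∑ i, p i) = 1 ∧
        s = ∑ i, a i / p i} ≤ S ^ 2 / (1 - x) := (csInf_le hbdd1 hmem).trans hval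
    have key : S ^ 2 / (1 - x) - S ^ 2 ≤ 6 * x * S ^ 2 := by
      rw [div_sub' h1x.ne']
      rw [div_le_iff₀ h1x]
      nlinarith [mul_nonneg (mul_nonneg hx0.le (by linarith : (0:ℝ) ≤ 5 - 6*x)) (sq_nonneg S)]
    have : 6 * (n:ℝ) * pmin * S ^ 2 = 6 * x * S ^ 2 := by rw [hxdef]; ring
    rw [this]
    linarith
end

section
/- Let a_1, ..., a_n be nonnegative reals and let p_min in (0, 1/n]. The minimum over probability vectors p with p(i) >= p_min for all i of sum_i a_i / p(i) is at most (sum_i sqrt(a_i))^2 / (1 - n * p_min)^2 when n * p_min < 1. -/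
/-- For nonnegative reals `a i` and `p_min ∈ (0, 1/n]` with `n * p_min < 1`, the minimum of
`∑ i, a i / p i` over the restricted simplex `{p : p i ≥ p_min}` is at most
`(∑ i, √(a i))^2 / (1 - n * p_min)^2`. -/
theorem stmt_8 (n : ℕ) (a : Fin n → ℝ) (ha : ∀ i, 0 ≤ a i) (pmin : ℝ)
    (hpmin : 0 < pmin) (hpmin' : pmin ≤ 1 / n) (hlt : (n : ℝ) * pmin < 1) :
    sInf {s : ℝ | ∃ p : Fin n → ℝ, (∀ i, pmin ≤ p i) ∧ (∑ i, p i) = 1 ∧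
        s = ∑ i, a i / p i}
      ≤ (∑ i, Real.sqrt (a i)) ^ 2 / (1 - (n : ℝ) * pmin) ^ 2 := by
  have hn : 0 < n := by
    rcases Nat.eq_zero_or_pos n with h | h
    · subst h; simp at hpmin'; linarith
    · exact h
  have hnR : (0:ℝ) < n := by exact_mod_cast hn
  have hc : 0 < 1 - (n:ℝ) * pmin := by linarith
  have hc1 : (n:ℝ) * pmin > 0 := by positivity
  set S := ∑ i, Real.sqrt (a i) with hS
  have hS0 : 0 ≤ S := Finset.sum_nonneg fun i _ => Real.sqrt_nonneg _
  have hbdd : BddBelow {s : ℝ | ∃ p : Fin n → ℝ, (∀ i, pmin ≤ p i) ∧ (∑ i, p i) = 1 ∧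
      s = ∑ i, a i / p i} := by
    refine ⟨0, fun s hs => ?_⟩
    obtain ⟨p, hp1, hp2, rfl⟩ := hs
    exact Finset.sum_nonneg fun i _ => div_nonneg (ha i) (le_of_lt (lt_of_lt_of_le hpmin (hp1 i)))
  have hrhs : 0 ≤ S ^ 2 / (1 - (n:ℝ) * pmin) ^ 2 := by positivity
  rcases eq_or_lt_of_le hS0 with hS0' | hSpos
  · -- all a i = 0
    have hai : ∀ i, a i = 0 := by
      intro i
      have h := (Finset.sum_eq_zero_iff_of_nonneg
        (fun i _ => Real.sqrt_nonneg (a i))).mp hS0'.symm i (Finset.mem_univ i)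
      nlinarith [Real.sq_sqrt (ha i)]
    have hmem : (0:ℝ) ∈ {s : ℝ | ∃ p : Fin n → ℝ, (∀ i, pmin ≤ p i) ∧ (∑ i, p i) = 1 ∧
        s = ∑ i, a i / p i} := by
      refine ⟨fun _ => 1 / n, fun i => hpmin', ?_, ?_⟩
      · rw [Finset.sum_const, Finset.card_univ, Fintype.card_fin]
        rw [nsmul_eq_mul]
        field_simp
      · simp [hai]
    have := csInf_le hbdd hmem
    linarith
  · set p : Fin n → ℝ := fun i => pmin + (1 - (n:ℝ) * pmin) * Real.sqrt (a i) / S with hp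
    have hp1 : ∀ i, pmin ≤ p i := by
      intro i
      have : 0 ≤ (1 - (n:ℝ) * pmin) * Real.sqrt (a i) / S := by positivity
      simp only [hp]; linarith
    have hp2 : ∑ i, p i = 1 := by
      simp only [hp]
      rw [Finset.sum_add_distrib, Finset.sum_const, Finset.card_univ, Fintype.card_fin,
        ← Finset.sum_div, ← Finset.mul_sum, ← hS]
      rw [nsmul_eq_mul]
      field_simp
      ring
    have hval : ∑ i, a i / p i ≤ S ^ 2 / (1 - (n:ℝ) * pmin) := by
      have step : ∀ i ∈ Finset.univ, a i / p i ≤ Real.sqrt (a i) * S / (1 - (n:ℝ) * pmin) := by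
        intro i _
        rcases eq_or_lt_of_le (ha i) with h0 | h0
        · rw [← h0]
          simp
        · have hsq : 0 < Real.sqrt (a i) := Real.sqrt_pos.mpr h0
          have hden : 0 < (1 - (n:ℝ) * pmin) * Real.sqrt (a i) / S := by positivity
          have hpile : (1 - (n:ℝ) * pmin) * Real.sqrt (a i) / S ≤ p i := by
            simp only [hp]; linarith
          calc a i / p i ≤ a i / ((1 - (n:ℝ) * pmin) * Real.sqrt (a i) / S) :=
                div_le_div_of_nonneg_left (ha i) hden hpile
            _ = Real.sqrt (a i) * S / (1 - (n:ℝ) * pmin) := by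
                rw [div_div_eq_mul_div]
                rw [div_eq_div_iff (by positivity) (by positivity)]
                linear_combination (-(S * (1 - (n:ℝ) * pmin))) * Real.mul_self_sqrt (ha i)
      calc ∑ i, a i / p i ≤ ∑ i, Real.sqrt (a i) * S / (1 - (n:ℝ) * pmin) :=
            Finset.sum_le_sum step
        _ = S ^ 2 / (1 - (n:ℝ) * pmin) := by
            rw [← Finset.sum_div, ← Finset.sum_mul, ← hS]; ring
    have hle2 : S ^ 2 / (1 - (n:ℝ) * pmin) ≤ S ^ 2 / (1 - (n:ℝ) * pmin) ^ 2 := by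
      apply div_le_div_of_nonneg_left (by positivity) (by positivity)
      nlinarith
    have hmem : (∑ i, a i / p i) ∈ {s : ℝ | ∃ p : Fin n → ℝ, (∀ i, pmin ≤ p i) ∧
        (∑ i, p i) = 1 ∧ s = ∑ i, a i / p i} := ⟨p, hp1, hp2, rfl⟩
    have := csInf_le hbdd hmem
    linarith
end

section
/- Let K be a convex set, R : K -> R a regularizer, and f_1, ..., f_T : K -> R cost functions. Suppose for each t in {1,...,T+1}, p_t minimizes over K the function p -> sum_{tau < t} f_tau(p) + R(p). Then for every p in K, sum_{t=1}^T f_t(p_t) - sum_{t=1}^T f_t(p) <= sum_{t=1}^T (f_t(p_t) - f_t(p_{t+1})) + (R(p) - R(p_1)). -/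
lemma btl_aux {E : Type*} (K : Set E) (f : ℕ → E → ℝ) (R : E → ℝ) (p : ℕ → E) :
    ∀ T : ℕ, (∀ t ∈ Finset.Icc 1 (T + 1), p t ∈ K) →
    (∀ t ∈ Finset.Icc 1 (T + 1), ∀ q ∈ K,
      (∑ τ ∈ Finset.Ico 1 t, f τ (p t)) + R (p t) ≤ (∑ τ ∈ Finset.Ico 1 t, f τ q) + R q) →
    ∀ q ∈ K, (∑ t ∈ Finset.Icc 1 T, f t (p (t + 1))) + R (p 1)
      ≤ (∑ t ∈ Finset.Icc 1 T, f t q) + R q := by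
  intro T
  induction T with
  | zero =>
    intro hmem hmin q hq
    simpa using hmin 1 (by simp) q hq
  | succ T ih =>
    intro hmem hmin q hq
    have hmem' : ∀ t ∈ Finset.Icc 1 (T + 1), p t ∈ K := fun t ht =>
      hmem t (Finset.mem_Icc.mpr ⟨(Finset.mem_Icc.mp ht).1, (Finset.mem_Icc.mp ht).2.trans (by omega)⟩)
    have hmin' : ∀ t ∈ Finset.Icc 1 (T + 1), ∀ q ∈ K,
        (∑ τ ∈ Finset.Ico 1 t, f τ (p t)) + R (p t) ≤ (∑ τ ∈ Finset.Ico 1 t, f τ q) + R q :=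
      fun t ht => hmin t (Finset.mem_Icc.mpr ⟨(Finset.mem_Icc.mp ht).1, (Finset.mem_Icc.mp ht).2.trans (by omega)⟩)
    have hpK : p (T + 2) ∈ K := hmem (T + 2) (by simp)
    have h1 := ih hmem' hmin' (p (T + 2)) hpK
    have h2 := hmin (T + 2) (by simp) q hq
    have e1 : Finset.Ico 1 (T + 2) = Finset.Icc 1 (T + 1) := by
      ext x; simp [Finset.mem_Ico, Finset.mem_Icc]; omega
    rw [e1] at h2
    have e2 : ∀ r : ℕ → ℝ, ∑ t ∈ Finset.Icc 1 (T + 1), r t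
        = (∑ t ∈ Finset.Icc 1 T, r t) + r (T + 1) := by
      intro r
      rw [← Finset.sum_Icc_succ_top (by omega : 1 ≤ T + 1)]
    rw [e2 (fun t => f t (p (t + 1))), e2 (fun t => f t q)]
    have h2' := h2
    rw [e2 (fun t => f t (p (T + 2))), e2 (fun t => f t q)] at h2'
    have e3 : T + 1 + 1 = T + 2 := rfl
    rw [e3]
    linarith
  
/-- FTL–BTL lemma (Kalai–Vempala). If for each `t ∈ {1, …, T+1}` the point `p t` minimizes
`q ↦ ∑_{τ < t} f τ q + R q` over `K`, then for every `p ∈ K`: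
`∑_{t=1}^T f t (p t) - ∑_{t=1}^T f t p ≤ ∑_{t=1}^T (f t (p t) - f t (p (t+1))) + (R p - R (p 1))`. -/
theorem stmt_11 {E : Type*} [AddCommGroup E] [Module ℝ E] (K : Set E) (hK : Convex ℝ K)
    (T : ℕ) (f : ℕ → E → ℝ) (R : E → ℝ) (p : ℕ → E)
    (hmem : ∀ t ∈ Finset.Icc 1 (T + 1), p t ∈ K)
    (hmin : ∀ t ∈ Finset.Icc 1 (T + 1), ∀ q ∈ K,
      (∑ τ ∈ Finset.Ico 1 t, f τ (p t)) + R (p t) ≤ (∑ τ ∈ Finset.Ico 1 t, f τ q) + R q) :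
    ∀ q ∈ K,
      (∑ t ∈ Finset.Icc 1 T, f t (p t)) - ∑ t ∈ Finset.Icc 1 T, f t q
        ≤ (∑ t ∈ Finset.Icc 1 T, (f t (p t) - f t (p (t + 1)))) + (R q - R (p 1)) := by
  intro q hq
  have h := btl_aux K f R p T hmem hmin q hq
  rw [Finset.sum_sub_distrib]
  linarith
end

section
/- Let K be a convex set, R : K -> R, and f_1, ..., f_T : K -> R. If p_{t+1} minimizes p -> sum_{tau <= t} f_tau(p) + R(p) over K for each t in {0,...,T}, then for every p in K: sum_{t=1}^T f_t(p_{t+1}) + R(p_1) <= sum_{t=1}^T f_t(p) + R(p). -/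
/-- Be-The-Leader lemma. If for each `t ∈ {0, …, T}` the point `p (t+1)` minimizes
`q ↦ ∑_{τ ≤ t} f τ q + R q` over `K`, then for every `q ∈ K`:
`∑_{t=1}^T f t (p (t+1)) + R (p 1) ≤ ∑_{t=1}^T f t q + R q`. -/
theorem stmt_12 {E : Type*} [AddCommGroup E] [Module ℝ E] (K : Set E) (hK : Convex ℝ K)
    (T : ℕ) (f : ℕ → E → ℝ) (R : E → ℝ) (p : ℕ → E)
    (hmem : ∀ t ≤ T, p (t + 1) ∈ K)
    (hmin : ∀ t ≤ T, ∀ q ∈ K,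
      (∑ τ ∈ Finset.Icc 1 t, f τ (p (t + 1))) + R (p (t + 1))
        ≤ (∑ τ ∈ Finset.Icc 1 t, f τ q) + R q) :
    ∀ q ∈ K,
      (∑ t ∈ Finset.Icc 1 T, f t (p (t + 1))) + R (p 1)
        ≤ (∑ t ∈ Finset.Icc 1 T, f t q) + R q := by
  induction T with
  | zero =>
    intro q hq
    simpa using hmin 0 le_rfl q hq
  | succ T ih =>
    intro q hq
    have ih' := ih (fun t ht => hmem t (ht.trans (Nat.le_succ T)))
      (fun t ht => hmin t (ht.trans (Nat.le_succ T)))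
      (p (T + 2)) (hmem (T + 1) le_rfl)
    have hmin' := hmin (T + 1) le_rfl q hq
    rw [Finset.sum_Icc_succ_top (by omega : 1 ≤ T + 1)] at hmin' ⊢
    rw [Finset.sum_Icc_succ_top (by omega : 1 ≤ T + 1)] at hmin'
    rw [Finset.sum_Icc_succ_top (by omega : 1 ≤ T + 1)]
    simp only [show T + 1 + 1 = T + 2 from rfl] at hmin'
    linarith
end

section
/- For any nonnegative l_t(i) with l_t(i)^2 <= L, if p_t(i) = sqrt(l_{1:t-1}^2(i) + L) / c_t where c_t = sum_j sqrt(l_{1:t-1}^2(j) + L) and l_{1:t}^2(i) = sum_{tau<=t} l_tau(i)^2, then sum_{t=1}^T sum_{i=1}^n l_t(i)^2 * (1/p_t(i) - 1/p_{t+1}(i)) <= 22 * n * sqrt(L) * sum_{i=1}^n sqrt(l_{1:T}^2(i) + L). -/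
lemma stmt_14_tele (g : ℕ → ℝ) (T : ℕ) :
    ∑ t ∈ Finset.Icc 1 T, (g t - g (t + 1)) = g 1 - g (T + 1) := by
  induction T with
  | zero => simp
  | succ T ih =>
      rw [Finset.sum_Icc_succ_top (by omega), ih]; ring

/-- FTRL stability bound: with `c t = ∑ j, √(l²_{1:t-1}(j) + L)` (a nondecreasing sequence of
positive reals) and `p t i = √(l²_{1:t-1}(i) + L) / c t`, for nonnegative losses with
`l t i ^ 2 ≤ L`:
`∑_{t=1}^T ∑ i, l t i ^ 2 * (1 / p t i - 1 / p (t+1) i) ≤ 22 n √L ∑ i, √(l²_{1:T}(i) + L)`. -/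
theorem stmt_14 (n T : ℕ) (hn : 0 < n) (L : ℝ) (hL : 0 < L)
    (l : ℕ → Fin n → ℝ) (hl : ∀ t i, 0 ≤ l t i)
    (hlL : ∀ t ∈ Finset.Icc 1 T, ∀ i, (l t i) ^ 2 ≤ L)
    (c : ℕ → ℝ)
    (hc : ∀ t, c t = ∑ j, Real.sqrt ((∑ τ ∈ Finset.Ico 1 t, (l τ j) ^ 2) + L))
    (p : ℕ → Fin n → ℝ)
    (hp : ∀ t i, p t i = Real.sqrt ((∑ τ ∈ Finset.Ico 1 t, (l τ i) ^ 2) + L) / c t) :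
    ∑ t ∈ Finset.Icc 1 T, ∑ i, (l t i) ^ 2 * (1 / p t i - 1 / p (t + 1) i)
      ≤ 22 * n * Real.sqrt L *
          ∑ i, Real.sqrt ((∑ τ ∈ Finset.Icc 1 T, (l τ i) ^ 2) + L) := by
  set S : Fin n → ℕ → ℝ := fun i t => (∑ τ ∈ Finset.Ico 1 t, (l τ i) ^ 2) + L with hS
  have hSpos : ∀ i t, 0 < S i t := by
    intro i t
    have h1 : 0 ≤ ∑ τ ∈ Finset.Ico 1 t, (l τ i) ^ 2 :=
      Finset.sum_nonneg fun _ _ => sq_nonneg _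
    simp only [hS]; linarith
  have hSL : ∀ i t, L ≤ S i t := by
    intro i t
    have h1 : 0 ≤ ∑ τ ∈ Finset.Ico 1 t, (l τ i) ^ 2 :=
      Finset.sum_nonneg fun _ _ => sq_nonneg _
    simp only [hS]; linarith
  have hSmono : ∀ i, Monotone (S i) := by
    intro i a b hab
    exact add_le_add
      (Finset.sum_le_sum_of_subset_of_nonneg (Finset.Ico_subset_Ico le_rfl hab)
        (fun _ _ _ => sq_nonneg _)) le_rfl
  have hsqrtpos : ∀ i t, 0 < Real.sqrt (S i t) := fun i t => Real.sqrt_pos.2 (hSpos i t)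
  have hcS : ∀ t, c t = ∑ j, Real.sqrt (S j t) := fun t => hc t
  have hcpos : ∀ t, 0 < c t := by
    intro t
    rw [hcS]
    exact Finset.sum_pos (fun j _ => hsqrtpos j t) (Finset.univ_nonempty_iff.2 ⟨⟨0, hn⟩⟩)
  have hcmono : ∀ a b, a ≤ b → c a ≤ c b := by
    intro a b hab
    rw [hcS, hcS]
    exact Finset.sum_le_sum fun j _ => Real.sqrt_le_sqrt (hSmono j hab)
  -- g i t = 1 / √(S i t)
  set g : Fin n → ℕ → ℝ := fun i t => 1 / Real.sqrt (S i t) with hg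
  have hgnonneg : ∀ i t, 0 ≤ g i t := fun i t => by positivity
  have hgmono : ∀ i a b, a ≤ b → g i b ≤ g i a := by
    intro i a b hab
    exact one_div_le_one_div_of_le (hsqrtpos i a) (Real.sqrt_le_sqrt (hSmono i hab))
  have hinvp : ∀ t i, 1 / p t i = c t / Real.sqrt (S i t) := by
    intro t i
    rw [hp, one_div_div]
  -- key per-term bound
  have key : ∀ t ∈ Finset.Icc 1 T, ∀ i : Fin n,
      (l t i) ^ 2 * (1 / p t i - 1 / p (t + 1) i)
        ≤ L * (c (T + 1) * (g i t - g i (t + 1))) := by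
    intro t ht i
    have htT : t + 1 ≤ T + 1 := by
      have := (Finset.mem_Icc.1 ht).2; omega
    have hgd : 0 ≤ g i t - g i (t + 1) := sub_nonneg.2 (hgmono i t (t + 1) (by omega))
    have step1 : 1 / p t i - 1 / p (t + 1) i ≤ c (t + 1) * (g i t - g i (t + 1)) := by
      rw [hinvp, hinvp, mul_sub]
      have h1 : c t / Real.sqrt (S i t) ≤ c (t + 1) * g i t := by
        rw [hg]
        rw [mul_one_div]
        exact div_le_div_of_nonneg_right (hcmono t (t + 1) (by omega)) (hsqrtpos i t).le
      have h2 : c (t + 1) * g i (t + 1) = c (t + 1) / Real.sqrt (S i (t + 1)) := by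
        rw [hg, mul_one_div]
      linarith
    have step2 : c (t + 1) * (g i t - g i (t + 1)) ≤ c (T + 1) * (g i t - g i (t + 1)) :=
      mul_le_mul_of_nonneg_right (hcmono (t + 1) (T + 1) htT) hgd
    have hcg : 0 ≤ c (T + 1) * (g i t - g i (t + 1)) :=
      mul_nonneg (hcpos (T + 1)).le hgd
    calc (l t i) ^ 2 * (1 / p t i - 1 / p (t + 1) i)
        ≤ (l t i) ^ 2 * (c (T + 1) * (g i t - g i (t + 1))) := by
          exact mul_le_mul_of_nonneg_left (step1.trans step2) (sq_nonneg _)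
      _ ≤ L * (c (T + 1) * (g i t - g i (t + 1))) :=
          mul_le_mul_of_nonneg_right (hlL t ht i) hcg
  have hsum1 : ∑ t ∈ Finset.Icc 1 T, ∑ i, (l t i) ^ 2 * (1 / p t i - 1 / p (t + 1) i)
      ≤ ∑ t ∈ Finset.Icc 1 T, ∑ i, L * (c (T + 1) * (g i t - g i (t + 1))) :=
    Finset.sum_le_sum fun t ht => Finset.sum_le_sum fun i _ => key t ht i
  have hsum2 : ∑ t ∈ Finset.Icc 1 T, ∑ i : Fin n, L * (c (T + 1) * (g i t - g i (t + 1)))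
      = ∑ i : Fin n, L * c (T + 1) * (g i 1 - g i (T + 1)) := by
    rw [Finset.sum_comm]
    refine Finset.sum_congr rfl fun i _ => ?_
    rw [← Finset.mul_sum, ← Finset.mul_sum, stmt_14_tele (g i) T, mul_assoc]
  have hg1 : ∀ i : Fin n, g i 1 = 1 / Real.sqrt L := by
    intro i
    simp [hg, hS]
  have hsum3 : ∑ i : Fin n, L * c (T + 1) * (g i 1 - g i (T + 1))
      ≤ n * (L * c (T + 1) * (1 / Real.sqrt L)) := by
    have : ∀ i : Fin n, L * c (T + 1) * (g i 1 - g i (T + 1))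
        ≤ L * c (T + 1) * (1 / Real.sqrt L) := by
      intro i
      have : g i 1 - g i (T + 1) ≤ 1 / Real.sqrt L := by
        rw [hg1 i]; linarith [hgnonneg i (T + 1)]
      exact mul_le_mul_of_nonneg_left this (mul_nonneg hL.le (hcpos (T + 1)).le)
    calc ∑ i : Fin n, L * c (T + 1) * (g i 1 - g i (T + 1))
        ≤ ∑ _i : Fin n, L * c (T + 1) * (1 / Real.sqrt L) :=
          Finset.sum_le_sum fun i _ => this i
      _ = n * (L * c (T + 1) * (1 / Real.sqrt L)) := by
          rw [Finset.sum_const, Finset.card_univ, Fintype.card_fin, nsmul_eq_mul]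
  have hcfinal : c (T + 1) = ∑ i, Real.sqrt ((∑ τ ∈ Finset.Icc 1 T, (l τ i) ^ 2) + L) := by
    rw [hc]
    refine Finset.sum_congr rfl fun i _ => ?_
    rw [Finset.Ico_add_one_right_eq_Icc]
  have hLdiv : L * (1 / Real.sqrt L) = Real.sqrt L := by
    rw [mul_one_div]
    nth_rewrite 1 [← Real.sq_sqrt hL.le]
    rw [sq, mul_div_assoc, div_self (Real.sqrt_pos.2 hL).ne', mul_one]
  have hfinal : (n : ℝ) * (L * c (T + 1) * (1 / Real.sqrt L))
      ≤ 22 * n * Real.sqrt L * c (T + 1) := by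
    have h1 : (n : ℝ) * (L * c (T + 1) * (1 / Real.sqrt L))
        = n * Real.sqrt L * c (T + 1) := by
      rw [show L * c (T + 1) * (1 / Real.sqrt L) = (L * (1 / Real.sqrt L)) * c (T + 1) by ring,
        hLdiv]; ring
    rw [h1]
    have hnn : (0:ℝ) ≤ n * Real.sqrt L * c (T + 1) := by
      have := (hcpos (T + 1)).le
      positivity
    nlinarith [hnn]
  calc ∑ t ∈ Finset.Icc 1 T, ∑ i, (l t i) ^ 2 * (1 / p t i - 1 / p (t + 1) i)
      ≤ ∑ i : Fin n, L * c (T + 1) * (g i 1 - g i (T + 1)) := hsum1.trans (le_of_eq hsum2)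
    _ ≤ n * (L * c (T + 1) * (1 / Real.sqrt L)) := hsum3
    _ ≤ 22 * n * Real.sqrt L * c (T + 1) := hfinal
    _ = 22 * n * Real.sqrt L *
          ∑ i, Real.sqrt ((∑ τ ∈ Finset.Icc 1 T, (l τ i) ^ 2) + L) := by rw [hcfinal]
end

section
/- Let l_t(i) >= 0 for t in [T], i in [n], with l_*(i) = lim_t l_t(i) existing, L_* = (1/n) sum_i l_*(i), L(w_t) = (1/n) sum_i l_t(i), and V_T(i) = sum_t (l_t(i) - l_*(i))^2. If (1/T) sum_{t=1}^T L(w_t) >= L_* for all T >= 1, then (1/n^2) * min over the simplex p of sum_{t=1}^T sum_i l_t(i)^2 / p(i) is at most (1/n^2) * sum_{t=1}^T min over p of sum_i l_t(i)^2/p(i) + 2*sqrt(T)*L_* * (1/n) sum_i sqrt(V_T(i)) + ((1/n) sum_i sqrt(V_T(i)))^2. -/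
open Finset

lemma sqrt_sum_add_le {m : Type*} (s : Finset m) (a b : m → ℝ) :
    Real.sqrt (∑ t ∈ s, (a t + b t) ^ 2) ≤
      Real.sqrt (∑ t ∈ s, a t ^ 2) + Real.sqrt (∑ t ∈ s, b t ^ 2) := by
  have h1 : (0:ℝ) ≤ Real.sqrt (∑ t ∈ s, a t ^ 2) + Real.sqrt (∑ t ∈ s, b t ^ 2) := by positivity
  rw [show Real.sqrt (∑ t ∈ s, a t ^ 2) + Real.sqrt (∑ t ∈ s, b t ^ 2)
      = Real.sqrt ((Real.sqrt (∑ t ∈ s, a t ^ 2) + Real.sqrt (∑ t ∈ s, b t ^ 2))^2) from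
      (Real.sqrt_sq h1).symm]
  apply Real.sqrt_le_sqrt
  have hcs := Real.sum_mul_le_sqrt_mul_sqrt s a b
  have ha : (0:ℝ) ≤ ∑ t ∈ s, a t ^ 2 := by positivity
  have hb : (0:ℝ) ≤ ∑ t ∈ s, b t ^ 2 := by positivity
  have hsa := Real.sq_sqrt ha
  have hsb := Real.sq_sqrt hb
  have hexp : ∑ t ∈ s, (a t + b t) ^ 2
      = ∑ t ∈ s, a t ^ 2 + 2 * ∑ t ∈ s, a t * b t + ∑ t ∈ s, b t ^ 2 := by
    simp only [add_sq]
    rw [sum_add_distrib, sum_add_distrib, mul_sum]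
    ring_nf
  nlinarith

lemma inf_simplex_ge {n : ℕ} (hn : 0 < n) (a : Fin n → ℝ) :
    (∑ i, a i) ^ 2 ≤ sInf {s : ℝ | ∃ p : Fin n → ℝ, (∀ i, 0 < p i) ∧ (∑ i, p i) = 1 ∧
      s = ∑ i, (a i) ^ 2 / p i} := by
  apply le_csInf
  · refine ⟨_, fun _ => (n:ℝ)⁻¹, fun _ => inv_pos.2 (Nat.cast_pos.2 hn), ?_, rfl⟩
    rw [Finset.sum_const, Finset.card_univ, Fintype.card_fin, nsmul_eq_mul]
    field_simp
  · rintro s ⟨p, hp, hps, rfl⟩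
    have := Finset.sq_sum_div_le_sum_sq_div (univ : Finset (Fin n)) a
      (g := p) (fun i _ => hp i)
    rwa [hps, div_one] at this

lemma inf_simplex_le {n : ℕ} (hn : 0 < n) (A : Fin n → ℝ) (hA : ∀ i, 0 ≤ A i) :
    sInf {s : ℝ | ∃ p : Fin n → ℝ, (∀ i, 0 < p i) ∧ (∑ i, p i) = 1 ∧
      s = ∑ i, A i / p i} ≤ (∑ i, Real.sqrt (A i)) ^ 2 := by
  set M := ∑ i, Real.sqrt (A i) with hM
  have hM0 : 0 ≤ M := by positivity
  have hbdd : BddBelow {s : ℝ | ∃ p : Fin n → ℝ, (∀ i, 0 < p i) ∧ (∑ i, p i) = 1 ∧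
      s = ∑ i, A i / p i} := by
    refine ⟨0, ?_⟩
    rintro s ⟨p, hp, _, rfl⟩
    exact Finset.sum_nonneg fun i _ => div_nonneg (hA i) (hp i).le
  apply le_of_forall_pos_le_add
  intro ε hε
  set δ : ℝ := ε / (n * (M + 1)) with hδ
  have hδ0 : 0 < δ := by
    apply div_pos hε
    positivity
  set S : ℝ := M + n * δ with hS
  have hS0 : 0 < S := by positivity
  set p : Fin n → ℝ := fun i => (Real.sqrt (A i) + δ) / S with hp
  have hppos : ∀ i, 0 < p i := fun i => div_pos (by positivity) hS0
  have hpsum : ∑ i, p i = 1 := by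
    rw [hp, ← Finset.sum_div, Finset.sum_add_distrib]
    rw [Finset.sum_const, Finset.card_univ, Fintype.card_fin, nsmul_eq_mul, ← hM,
      div_eq_one_iff_eq hS0.ne', hS]
  have hmem : (∑ i, A i / p i) ∈ {s : ℝ | ∃ p : Fin n → ℝ, (∀ i, 0 < p i) ∧ (∑ i, p i) = 1 ∧
      s = ∑ i, A i / p i} := ⟨p, hppos, hpsum, rfl⟩
  refine (csInf_le hbdd hmem).trans ?_
  have hval : ∑ i, A i / p i ≤ S * M := by
    have : ∀ i, A i / p i ≤ S * Real.sqrt (A i) := by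
      intro i
      rw [hp, div_div_eq_mul_div, div_le_iff₀ (by positivity)]
      have : A i ≤ Real.sqrt (A i) * (Real.sqrt (A i) + δ) := by
        have := Real.sq_sqrt (hA i)
        nlinarith [Real.sqrt_nonneg (A i)]
      nlinarith
    calc ∑ i, A i / p i ≤ ∑ i, S * Real.sqrt (A i) := Finset.sum_le_sum fun i _ => this i
      _ = S * M := by rw [← Finset.mul_sum]
  refine hval.trans ?_
  have hSM : S * M = M^2 + n * δ * M := by rw [hS]; ring
  rw [hSM]
  have : (n:ℝ) * δ * M ≤ ε := by
    rw [hδ]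
    rw [div_eq_mul_inv, mul_inv]
    have hn' : (0:ℝ) < n := Nat.cast_pos.2 hn
    have h1 : (n:ℝ) * (ε * ((n:ℝ)⁻¹ * (M+1)⁻¹)) * M = ε * (M / (M+1)) := by
      field_simp
    rw [h1]
    have : M / (M + 1) ≤ 1 := by
      rw [div_le_one (by linarith)]; linarith
    nlinarith
  linarith

/-- Lemma 1 of the paper: under the assumption that the asymptotic average loss `L_*`
lower-bounds all running averages, the best-in-hindsight value
`(1/n²) min_{p ∈ Δ} ∑_t ∑_i l t i ^ 2 / p i` is at most the ideal per-round baseline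
`(1/n²) ∑_t min_{p ∈ Δ} ∑_i l t i ^ 2 / p i` plus
`2 √T L_* (1/n) ∑_i √(V_T i) + ((1/n) ∑_i √(V_T i))²`. -/
theorem stmt_17 (n T : ℕ) (hn : 0 < n) (hT : 0 < T)
    (l : ℕ → Fin n → ℝ) (hl : ∀ t i, 0 ≤ l t i)
    (lstar : Fin n → ℝ)
    (hlim : ∀ i, Filter.Tendsto (fun t => l t i) Filter.atTop (nhds (lstar i)))
    (Lstar : ℝ) (hLstar : Lstar = (1 / n) * ∑ i, lstar i)
    (V : Fin n → ℝ) (hV : ∀ i, V i = ∑ t ∈ Finset.Icc 1 T, (l t i - lstar i) ^ 2)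
    (havg : ∀ T' : ℕ, 1 ≤ T' →
      Lstar ≤ (1 / T') * ∑ t ∈ Finset.Icc 1 T', (1 / n) * ∑ i, l t i) :
    (1 / (n : ℝ) ^ 2) *
        sInf {s : ℝ | ∃ p : Fin n → ℝ, (∀ i, 0 < p i) ∧ (∑ i, p i) = 1 ∧
          s = ∑ t ∈ Finset.Icc 1 T, ∑ i, (l t i) ^ 2 / p i}
      ≤ (1 / (n : ℝ) ^ 2) *
            (∑ t ∈ Finset.Icc 1 T,
              sInf {s : ℝ | ∃ p : Fin n → ℝ, (∀ i, 0 < p i) ∧ (∑ i, p i) = 1 ∧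
                s = ∑ i, (l t i) ^ 2 / p i})
          + 2 * Real.sqrt T * Lstar * ((1 / n) * ∑ i, Real.sqrt (V i))
          + ((1 / n) * ∑ i, Real.sqrt (V i)) ^ 2 := by
  have hn' : (0:ℝ) < n := Nat.cast_pos.2 hn
  have hT' : (0:ℝ) < T := Nat.cast_pos.2 hT
  set A : Fin n → ℝ := fun i => ∑ t ∈ Finset.Icc 1 T, (l t i)^2 with hA
  have hA0 : ∀ i, 0 ≤ A i := fun i => Finset.sum_nonneg fun t _ => sq_nonneg _
  have hls : ∀ i, 0 ≤ lstar i := fun i => ge_of_tendsto' (hlim i) (fun t => hl t i)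
  have hLs0 : 0 ≤ Lstar := by
    rw [hLstar]
    have : 0 ≤ ∑ i, lstar i := Finset.sum_nonneg fun i _ => hls i
    positivity
  set M := ∑ i, Real.sqrt (A i) with hM
  have hM0 : 0 ≤ M := by positivity
  set SV := ∑ i, Real.sqrt (V i) with hSV
  have hSV0 : 0 ≤ SV := by positivity
  -- Step 1: bound the LHS infimum
  have hsetT : {s : ℝ | ∃ p : Fin n → ℝ, (∀ i, 0 < p i) ∧ (∑ i, p i) = 1 ∧
      s = ∑ t ∈ Finset.Icc 1 T, ∑ i, (l t i) ^ 2 / p i}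
      = {s : ℝ | ∃ p : Fin n → ℝ, (∀ i, 0 < p i) ∧ (∑ i, p i) = 1 ∧
      s = ∑ i, A i / p i} := by
    ext s
    constructor
    · rintro ⟨p, h1, h2, rfl⟩
      exact ⟨p, h1, h2, by rw [Finset.sum_comm]; simp only [hA, Finset.sum_div]⟩
    · rintro ⟨p, h1, h2, rfl⟩
      exact ⟨p, h1, h2, by rw [Finset.sum_comm]; simp only [hA, Finset.sum_div]⟩
  have hInfLe : sInf {s : ℝ | ∃ p : Fin n → ℝ, (∀ i, 0 < p i) ∧ (∑ i, p i) = 1 ∧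
      s = ∑ t ∈ Finset.Icc 1 T, ∑ i, (l t i) ^ 2 / p i} ≤ M ^ 2 := by
    rw [hsetT]; exact inf_simplex_le hn A hA0
  -- Step 2: Minkowski per coordinate
  have hMink : ∀ i, Real.sqrt (A i) ≤ Real.sqrt T * lstar i + Real.sqrt (V i) := by
    intro i
    have h1 : Real.sqrt (A i) ≤ Real.sqrt (∑ t ∈ Finset.Icc 1 T, (lstar i) ^ 2)
        + Real.sqrt (∑ t ∈ Finset.Icc 1 T, (l t i - lstar i) ^ 2) := by
      have := sqrt_sum_add_le (Finset.Icc 1 T) (fun _ => lstar i) (fun t => l t i - lstar i)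
      simpa [hA] using this
    have h2 : ∑ t ∈ Finset.Icc 1 T, (lstar i) ^ 2 = T * (lstar i) ^ 2 := by
      rw [Finset.sum_const, Nat.card_Icc, nsmul_eq_mul]
      norm_num
    have h3 : Real.sqrt ((T:ℝ) * (lstar i) ^ 2) = Real.sqrt T * lstar i := by
      rw [Real.sqrt_mul (by positivity), Real.sqrt_sq (hls i)]
    rw [h2, h3, ← hV i] at h1
    exact h1
  have hMsum : M ≤ Real.sqrt T * (∑ i, lstar i) + SV := by
    calc M ≤ ∑ i, (Real.sqrt T * lstar i + Real.sqrt (V i)) :=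
          Finset.sum_le_sum fun i _ => hMink i
      _ = Real.sqrt T * (∑ i, lstar i) + SV := by
          rw [Finset.sum_add_distrib, ← Finset.mul_sum]
  -- Step 3: per-round lower bound on sInf
  have hRoundGe : ∀ t, ((∑ i, l t i)) ^ 2 ≤
      sInf {s : ℝ | ∃ p : Fin n → ℝ, (∀ i, 0 < p i) ∧ (∑ i, p i) = 1 ∧
        s = ∑ i, (l t i) ^ 2 / p i} := fun t => inf_simplex_ge hn (l t)
  -- Step 4: T * Lstar² ≤ (1/n²) * ∑ round sums
  set B : ℕ → ℝ := fun t => ∑ i, l t i with hB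
  have hB0 : ∀ t, 0 ≤ B t := fun t => Finset.sum_nonneg fun i _ => hl t i
  have hTLstar : (T:ℝ) * Lstar ≤ (1/n) * ∑ t ∈ Finset.Icc 1 T, B t := by
    have h := havg T hT
    have : (T:ℝ) * Lstar ≤ (T:ℝ) * ((1 / T) * ∑ t ∈ Finset.Icc 1 T, (1 / n) * ∑ i, l t i) :=
      mul_le_mul_of_nonneg_left h hT'.le
    rw [← mul_assoc, mul_one_div, div_self hT'.ne', one_mul, ← Finset.mul_sum] at this
    exact this
  have hCS : ((1/(n:ℝ)) * ∑ t ∈ Finset.Icc 1 T, B t) ^ 2 ≤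
      (T:ℝ) * ∑ t ∈ Finset.Icc 1 T, ((1/(n:ℝ)) * B t) ^ 2 := by
    have h := Finset.sum_mul_sq_le_sq_mul_sq (Finset.Icc 1 T)
      (fun t => (1/(n:ℝ)) * B t) (fun _ => (1:ℝ))
    simp only [mul_one, one_pow, Finset.sum_const, Nat.card_Icc, nsmul_eq_mul] at h
    have hc : ((T + 1 - 1 : ℕ) : ℝ) = (T:ℝ) := by norm_num
    rw [hc, mul_comm, ← Finset.mul_sum] at h
    exact h
  have hTL2 : (T:ℝ) * Lstar ^ 2 ≤ ∑ t ∈ Finset.Icc 1 T, ((1/(n:ℝ)) * B t) ^ 2 := by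
    have h1 : ((T:ℝ) * Lstar) ^ 2 ≤ ((1/(n:ℝ)) * ∑ t ∈ Finset.Icc 1 T, B t) ^ 2 := by
      apply pow_le_pow_left₀ (by positivity) hTLstar
    have h2 : ((T:ℝ) * Lstar)^2 ≤ (T:ℝ) * ∑ t ∈ Finset.Icc 1 T, ((1/(n:ℝ)) * B t) ^ 2 :=
      h1.trans hCS
    nlinarith
  -- Step 5: combine
  have hKey : (1/(n:ℝ)) * M ≤ Real.sqrt T * Lstar + (1/(n:ℝ)) * SV := by
    have := mul_le_mul_of_nonneg_left hMsum (le_of_lt (by positivity : (0:ℝ) < 1/(n:ℝ)))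
    rw [mul_add] at this
    calc (1/(n:ℝ)) * M ≤ (1/(n:ℝ)) * (Real.sqrt T * (∑ i, lstar i)) + (1/(n:ℝ)) * SV := this
      _ = Real.sqrt T * Lstar + (1/(n:ℝ)) * SV := by rw [hLstar]; ring
  have hKey2 : (1/(n:ℝ)^2) * M^2 ≤ (Real.sqrt T * Lstar + (1/(n:ℝ)) * SV)^2 := by
    have h1 : ((1/(n:ℝ)) * M)^2 ≤ (Real.sqrt T * Lstar + (1/(n:ℝ)) * SV)^2 :=
      pow_le_pow_left₀ (by positivity) hKey 2
    calc (1/(n:ℝ)^2) * M^2 = ((1/(n:ℝ)) * M)^2 := by ring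
      _ ≤ _ := h1
  have hSumGe : ∑ t ∈ Finset.Icc 1 T, ((1/(n:ℝ)) * B t) ^ 2 ≤
      (1/(n:ℝ)^2) * ∑ t ∈ Finset.Icc 1 T,
        sInf {s : ℝ | ∃ p : Fin n → ℝ, (∀ i, 0 < p i) ∧ (∑ i, p i) = 1 ∧
          s = ∑ i, (l t i) ^ 2 / p i} := by
    rw [Finset.mul_sum]
    apply Finset.sum_le_sum
    intro t _
    have h := hRoundGe t
    have : ((1/(n:ℝ)) * B t) ^ 2 = (1/(n:ℝ)^2) * (B t)^2 := by ring
    rw [this]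
    exact mul_le_mul_of_nonneg_left h (by positivity)
  have hexp : (Real.sqrt T * Lstar + (1/(n:ℝ)) * SV)^2
      = (T:ℝ) * Lstar^2 + 2 * Real.sqrt T * Lstar * ((1/(n:ℝ)) * SV)
        + ((1/(n:ℝ)) * SV)^2 := by
    have : Real.sqrt (T:ℝ) ^ 2 = (T:ℝ) := Real.sq_sqrt hT'.le
    nlinarith [this]
  have hfinal := mul_le_mul_of_nonneg_left hInfLe
    (le_of_lt (by positivity : (0:ℝ) < 1/(n:ℝ)^2))
  calc (1 / (n : ℝ) ^ 2) *
        sInf {s : ℝ | ∃ p : Fin n → ℝ, (∀ i, 0 < p i) ∧ (∑ i, p i) = 1 ∧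
          s = ∑ t ∈ Finset.Icc 1 T, ∑ i, (l t i) ^ 2 / p i}
      ≤ (1/(n:ℝ)^2) * M^2 := hfinal
    _ ≤ (Real.sqrt T * Lstar + (1/(n:ℝ)) * SV)^2 := hKey2
    _ = (T:ℝ) * Lstar^2 + 2 * Real.sqrt T * Lstar * ((1/(n:ℝ)) * SV)
        + ((1/(n:ℝ)) * SV)^2 := hexp
    _ ≤ _ := by
        have := hTL2.trans hSumGe
        linarith
end

section
/- For nonnegative reals u_1,...,u_n and v_1,...,v_n with |u_i - v_i| <= M_i for all i, we have (sum_i sqrt(u_i))^2 - (sum_i sqrt(v_i))^2 <= 2 * (sum_i sqrt(v_i)) * (sum_i min(sqrt(M_i), M_i/sqrt(v_i))) + 2 * (sum_i sqrt(M_i))^2. -/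
lemma aux_sqrt_diff (v M : ℝ) (hv : 0 ≤ v) (hM : 0 ≤ M) :
    Real.sqrt (v + M) - Real.sqrt v ≤
      if v = 0 then Real.sqrt M else min (Real.sqrt M) (M / Real.sqrt v) := by
  by_cases h : v = 0
  · simp [h]
  · have hv' : 0 < v := lt_of_le_of_ne hv (Ne.symm h)
    have hsv : 0 < Real.sqrt v := Real.sqrt_pos.mpr hv'
    simp only [h, if_false]
    refine le_min ?_ ?_
    · nlinarith [Real.sq_sqrt hv, Real.sq_sqrt hM, Real.sq_sqrt (add_nonneg hv hM),
        Real.sqrt_nonneg v, Real.sqrt_nonneg M, Real.sqrt_nonneg (v + M)]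
    · rw [sub_le_iff_le_add, div_add' _ _ _ (ne_of_gt hsv), le_div_iff₀ hsv]
      nlinarith [Real.sq_sqrt hv, Real.sq_sqrt (add_nonneg hv hM),
        Real.sqrt_nonneg (v + M), Real.mul_self_sqrt hv]

/-- For nonnegative reals `u i, v i` with `|u i - v i| ≤ M i`,
`(∑ √(u i))^2 - (∑ √(v i))^2 ≤ 2 (∑ √(v i)) (∑ min(√(M i), M i/√(v i))) + 2 (∑ √(M i))^2`,
where when `v i = 0` the `min` picks `√(M i)` (the other term being `+∞`). -/
theorem stmt_19 (n : ℕ) (u v M : Fin n → ℝ) (hu : ∀ i, 0 ≤ u i) (hv : ∀ i, 0 ≤ v i)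
    (hM : ∀ i, 0 ≤ M i) (hdiff : ∀ i, |u i - v i| ≤ M i) :
    (∑ i, Real.sqrt (u i)) ^ 2 - (∑ i, Real.sqrt (v i)) ^ 2
      ≤ 2 * (∑ i, Real.sqrt (v i)) *
          (∑ i, if v i = 0 then Real.sqrt (M i)
                else min (Real.sqrt (M i)) (M i / Real.sqrt (v i)))
        + 2 * (∑ i, Real.sqrt (M i)) ^ 2 := by
  set Su := ∑ i, Real.sqrt (u i) with hSu
  set Sv := ∑ i, Real.sqrt (v i) with hSv
  set T := ∑ i, (if v i = 0 then Real.sqrt (M i)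
                else min (Real.sqrt (M i)) (M i / Real.sqrt (v i))) with hT
  set W := ∑ i, Real.sqrt (M i) with hW
  have hSu_nonneg : 0 ≤ Su := Finset.sum_nonneg fun i _ => Real.sqrt_nonneg _
  have hSv_nonneg : 0 ≤ Sv := Finset.sum_nonneg fun i _ => Real.sqrt_nonneg _
  have hW_nonneg : 0 ≤ W := Finset.sum_nonneg fun i _ => Real.sqrt_nonneg _
  have hT_le_W : T ≤ W := by
    apply Finset.sum_le_sum
    intro i _
    by_cases h : v i = 0
    · simp [h]
    · simp [h, min_le_left]
  have hT_nonneg : 0 ≤ T := by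
    apply Finset.sum_nonneg
    intro i _
    by_cases h : v i = 0
    · simp [h, Real.sqrt_nonneg]
    · simp only [h, if_false, le_min_iff]
      exact ⟨Real.sqrt_nonneg _, div_nonneg (hM i) (Real.sqrt_nonneg _)⟩
  have hdiffS : Su - Sv ≤ T := by
    rw [hSu, hSv, hT, ← Finset.sum_sub_distrib]
    apply Finset.sum_le_sum
    intro i _
    have h1 : u i ≤ v i + M i := by
      have := abs_le.mp (hdiff i); linarith [this.2]
    calc Real.sqrt (u i) - Real.sqrt (v i)
        ≤ Real.sqrt (v i + M i) - Real.sqrt (v i) := by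
          have := Real.sqrt_le_sqrt h1; linarith
      _ ≤ _ := aux_sqrt_diff (v i) (M i) (hv i) (hM i)
  have hSuSv : Su ≤ Sv + T := by linarith
  nlinarith [mul_le_mul_of_nonneg_right hdiffS (add_nonneg hSu_nonneg hSv_nonneg),
    mul_le_mul_of_nonneg_left hSuSv hT_nonneg,
    mul_le_mul hT_le_W hT_le_W hT_nonneg hW_nonneg, sq_nonneg W]
end
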